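/- arXiv:2106.02957 — 4 statements merged into one kernel-verified Lean document; each statement's English description precedes it below -/
import Mathlib

section
/- Let s, ξ, η₁, η₂ be real numbers, set Δ := √(ξ² + η₁² + η₂²), and assume Δ > 0. Set a := (cosh(sΔ/√2) + ξ·sinh(sΔ/√2)/Δ)^(−1/2) and z := a·(iη₁ − η₂)·sinh(sΔ/√2)/Δ, and let p := [[a, z], [0, a⁻¹]]. Then p·pᴴ = exp(A), where A := (s/√2)·[[−ξ, iη₁−η₂], [−iη₁−η₂, ξ]] and pᴴ denotes the conjugate transpose of p. -/
/-!
The matrix `M = !![-ξ, β; conj β, ξ]` with `β = iη₁ - η₂` is traceless with `-det M = Δ²`, so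
`(M / Δ)² = 1` and the exponential series collapses to `exp (t M) = cosh (tΔ) + sinh (tΔ) • M / Δ`.
On the other side, `p pᴴ` has diagonal entries `a² + |z|²` and `a⁻²`; the choice
`a⁻² = cosh r + ξ sinh r / Δ` matches the lower one, and `cosh² - sinh² = 1` then matches the upper.
-/

open Matrix Complex
open scoped Nat

namespace NormedSpace

variable {𝔸 : Type*} [Ring 𝔸] [Algebra ℂ 𝔸] [TopologicalSpace 𝔸] [IsTopologicalRing 𝔸]
  [ContinuousSMul ℂ 𝔸] [T2Space 𝔸]

theorem exp_smul_of_sq_eq_one {y : 𝔸} (hy : y ^ 2 = 1) (c : ℂ) :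
    exp (c • y) = algebraMap ℂ 𝔸 (cosh c) + sinh c • y := by
  have heven (n : ℕ) : ((2 * n)! : ℂ)⁻¹ • (c • y) ^ (2 * n) =
      algebraMap ℂ 𝔸 (c ^ (2 * n) / (2 * n)!) := by
    rw [smul_pow, pow_mul y, hy, one_pow, smul_smul, Algebra.algebraMap_eq_smul_one,
      inv_mul_eq_div]
  have hodd (n : ℕ) : ((2 * n + 1)! : ℂ)⁻¹ • (c • y) ^ (2 * n + 1) =
      (c ^ (2 * n + 1) / (2 * n + 1)!) • y := by
    rw [smul_pow, pow_succ y, pow_mul y, hy, one_pow, one_mul, smul_smul, inv_mul_eq_div]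
  rw [exp_eq_tsum ℂ]
  refine HasSum.tsum_eq (HasSum.even_add_odd ?_ ?_)
  · simp_rw [heven]
    exact (Complex.hasSum_cosh c).map (Algebra.linearMap ℂ 𝔸) (continuous_algebraMap ℂ 𝔸)
  · simp_rw [hodd]
    exact (Complex.hasSum_sinh c).smul_const y

end NormedSpace

namespace Matrix

theorem sq_fin_two_of_trace_eq_zero {R : Type*} [CommRing R] (a b c : R) :
    (!![-a, b; c, a] : Matrix (Fin 2) (Fin 2) R) ^ 2 = algebraMap R _ (a ^ 2 + b * c) := by
  ext i j
  fin_cases i <;> fin_cases j <;> simp [sq, algebraMap_eq_diagonal] <;> ring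

theorem conjTranspose_fin_two {α : Type*} [Star α] (a b c d : α) :
    !![a, b; c, d]ᴴ = !![star a, star c; star b, star d] := by
  ext i j
  fin_cases i <;> fin_cases j <;> rfl

theorem upperTriangular_mul_conjTranspose_fin_two {α : Type*} [Semiring α] [StarRing α]
    (a b d : α) :
    !![a, b; 0, d] * !![a, b; 0, d]ᴴ =
      !![a * star a + b * star b, b * star d; d * star b, d * star d] := by
  simp [conjTranspose_fin_two]

theorem algebraMap_add_smul_fin_two {R : Type*} [CommSemiring R] (c d a₁₁ a₁₂ a₂₁ a₂₂ : R) :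
    algebraMap R (Matrix (Fin 2) (Fin 2) R) c + d • !![a₁₁, a₁₂; a₂₁, a₂₂] =
      !![c + d * a₁₁, d * a₁₂; d * a₂₁, c + d * a₂₂] := by
  ext i j
  fin_cases i <;> fin_cases j <;> simp [algebraMap_eq_diagonal]

end Matrix

namespace Real

theorem cosh_add_mul_sinh_pos {k : ℝ} (hk : |k| ≤ 1) (r : ℝ) : 0 < cosh r + k * sinh r := by
  have hsinh : |sinh r| < cosh r :=
    abs_lt.2 ⟨by linarith [sinh_neg r ▸ sinh_lt_cosh (-r), cosh_neg r], sinh_lt_cosh r⟩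
  have hk_sinh : |k * sinh r| ≤ |sinh r| := by
    rw [abs_mul]
    exact mul_le_of_le_one_left (abs_nonneg _) hk
  linarith [neg_abs_le (k * sinh r)]

theorem sq_rpow_neg_one_half {x : ℝ} (hx : 0 ≤ x) : (x ^ (-(1 / 2) : ℝ)) ^ 2 = x⁻¹ := by
  rw [← rpow_natCast, ← rpow_mul hx]
  norm_num [rpow_neg_one]

end Real

/-- The coordinate formula for `p = E_s(λ)`:  `p · pᴴ = exp(A)`. -/
theorem Es_coordinates (s ξ η₁ η₂ : ℝ) (Δ : ℝ)
    (hΔdef : Δ = Real.sqrt (ξ ^ 2 + η₁ ^ 2 + η₂ ^ 2)) (hΔ : 0 < Δ)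
    (a : ℝ)
    (ha : a = (Real.cosh (s * Δ / Real.sqrt 2) +
        ξ * Real.sinh (s * Δ / Real.sqrt 2) / Δ) ^ (-(1 / 2) : ℝ))
    (z : ℂ)
    (hz : z = (a : ℂ) * (I * η₁ - η₂) * Real.sinh (s * Δ / Real.sqrt 2) / Δ)
    (p : Matrix (Fin 2) (Fin 2) ℂ)
    (hp : p = !![(a : ℂ), z; 0, (a : ℂ)⁻¹]) :
    p * pᴴ =
      NormedSpace.exp
        (((s : ℂ) / Real.sqrt 2) •
          !![(-ξ : ℂ), I * η₁ - η₂; -I * η₁ - η₂, (ξ : ℂ)]) := by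
  set r := s * Δ / Real.sqrt 2 with hr
  have hΔ2 : (Δ : ℂ) ^ 2 = ξ ^ 2 + η₁ ^ 2 + η₂ ^ 2 := by
    rw [hΔdef]
    exact_mod_cast Real.sq_sqrt (by positivity)
  have hΔC : (Δ : ℂ) ≠ 0 := by exact_mod_cast hΔ.ne'
  have hβγ : (I * η₁ - η₂) * (-I * η₁ - η₂) / Δ ^ 2 = 1 - ξ ^ 2 / (Δ : ℂ) ^ 2 := by
    field_simp
    linear_combination (-(η₁ : ℂ) ^ 2) * I_sq - hΔ2
  have hξ : |ξ / Δ| ≤ 1 := by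
    have : |ξ| ≤ Δ := by
      rw [hΔdef, ← Real.sqrt_sq_eq_abs]
      exact Real.sqrt_le_sqrt (by linarith [sq_nonneg η₁, sq_nonneg η₂])
    rw [abs_div, abs_of_pos hΔ]
    exact div_le_one_of_le₀ this hΔ.le
  have hpos : 0 < Real.cosh r + ξ * Real.sinh r / Δ := by
    simpa only [div_mul_eq_mul_div] using Real.cosh_add_mul_sinh_pos hξ r
  have ha2 : (a : ℂ) ^ 2 * (Real.cosh r + ξ * Real.sinh r / Δ) = 1 := by
    exact_mod_cast (by rw [ha, Real.sq_rpow_neg_one_half hpos.le, inv_mul_cancel₀ hpos.ne'] :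
      a ^ 2 * (Real.cosh r + ξ * Real.sinh r / Δ) = 1)
  have ha0 : (a : ℂ) ≠ 0 := by exact_mod_cast (ha ▸ Real.rpow_pos_of_pos hpos _).ne'
  have hcosh : (Real.cosh r : ℂ) ^ 2 = Real.sinh r ^ 2 + 1 := by exact_mod_cast Real.cosh_sq r
  have hsmul : ((s : ℂ) / Real.sqrt 2) • !![(-ξ : ℂ), I * η₁ - η₂; -I * η₁ - η₂, (ξ : ℂ)] =
      (r : ℂ) • ((Δ : ℂ)⁻¹ • !![(-ξ : ℂ), I * η₁ - η₂; -I * η₁ - η₂, (ξ : ℂ)]) := by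
    rw [smul_smul, hr]
    congr 1
    push_cast
    field_simp
  have hinvol : ((Δ : ℂ)⁻¹ • !![(-ξ : ℂ), I * η₁ - η₂; -I * η₁ - η₂, (ξ : ℂ)]) ^ 2 = 1 := by
    rw [smul_pow, sq_fin_two_of_trace_eq_zero, Algebra.smul_def, ← map_mul,
      ← map_one (algebraMap ℂ _)]
    congr 1
    linear_combination hβγ
  rw [hsmul, NormedSpace.exp_smul_of_sq_eq_one hinvol, ← ofReal_cosh, ← ofReal_sinh, smul_smul,
    algebraMap_add_smul_fin_two, hp, upperTriangular_mul_conjTranspose_fin_two, hz]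
  ext i j
  fin_cases i <;> fin_cases j <;>
    simp only [Fin.zero_eta, Fin.mk_one, of_apply, cons_val', cons_val_zero, cons_val_one,
      cons_val_fin_one, RCLike.star_def, map_mul, map_div₀, map_sub, map_inv₀, conj_ofReal, conj_I]
  · linear_combination (Real.cosh r - ξ * Real.sinh r / Δ : ℂ) * ha2 - (a : ℂ) ^ 2 * hcosh
      + ((a : ℂ) ^ 2 * Real.sinh r ^ 2) * hβγ
  · field_simp
  · field_simp
  · linear_combination -eq_inv_of_mul_eq_one_right ha2
end

section
/- Let x := (1/(2√2))·[[0,1],[−1,0]], y := (i/(2√2))·[[0,1],[1,0]], t := (i/(2√2))·[[1,0],[0,−1]] be 2×2 complex matrices. Let ξ, η₁, η₂ be real numbers, not all zero, set Δ² := ξ² + η₁² + η₂², and let L := ξ·t + η₁·x + η₂·y. Define X_t := (√2/Δ²)·(η₂·x − η₁·y), X_x := (√2/Δ²)·(ξ·y − η₂·t), X_y := (√2/Δ²)·(η₁·t − ξ·x). Then the matrix commutators satisfy: [X_t, L] = t − (ξ/Δ²)·L, [X_x, L] = x − (η₁/Δ²)·L, and [X_y, L] = y − (η₂/Δ²)·L.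 -/
/-!
The matrices `x, y, t` span a copy of `so(3)`: their brackets are cyclic,
`[x, y] = t/√2`, `[y, t] = x/√2`, `[t, x] = y/√2`. For any such triple a direct expansion gives
`[η₂x − η₁y, ξt + η₁x + η₂y] = (Δ²t − ξL)/√2`, which is the first identity after rescaling;
the other two are the same identity for the rotated triples `(y, t, x)` and `(t, x, y)`.
-/

open Matrix Complex

attribute [local instance] LieRing.ofAssociativeRing

structure IsCyclicTriple {K M : Type*} [CommRing K] [LieRing M] [LieAlgebra K M]
    (c : K) (x y t : M) : Prop where
  lie_xy : ⁅x, y⁆ = c • t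
  lie_yt : ⁅y, t⁆ = c • x
  lie_tx : ⁅t, x⁆ = c • y

namespace IsCyclicTriple

section CommRing

variable {K M : Type*} [CommRing K] [LieRing M] [LieAlgebra K M] {c : K} {x y t : M}

theorem rotate (h : IsCyclicTriple c x y t) : IsCyclicTriple c y t x :=
  ⟨h.lie_yt, h.lie_tx, h.lie_xy⟩

theorem lie_eq (h : IsCyclicTriple c x y t) (a b d : K) :
    ⁅d • x - b • y, a • t + b • x + d • y⁆ =
      c • ((a ^ 2 + b ^ 2 + d ^ 2) • t - a • (a • t + b • x + d • y)) := by
  have lie_yx : ⁅y, x⁆ = -(c • t) := by rw [← lie_skew, h.lie_xy]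
  have lie_xt : ⁅x, t⁆ = -(c • y) := by rw [← lie_skew, h.lie_tx]
  simp only [lie_add, sub_lie, smul_lie, lie_smul, lie_self, h.lie_xy, lie_yx, h.lie_yt, lie_xt]
  module

end CommRing

theorem lie_normalized {K M : Type*} [Field K] [LieRing M] [LieAlgebra K M] {c : K} {x y t : M}
    (h : IsCyclicTriple c x y t) (hc : c ≠ 0) {a b d Δ : K}
    (hΔ : Δ = a ^ 2 + b ^ 2 + d ^ 2) (hΔ0 : Δ ≠ 0) {L : M} (hL : L = a • t + b • x + d • y) :
    ⁅(c⁻¹ / Δ) • (d • x - b • y), L⁆ = t - (a / Δ) • L := by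
  rw [smul_lie, hL, h.lie_eq, ← hΔ, smul_smul, smul_sub, smul_smul, smul_smul]
  match_scalars <;> field_simp

end IsCyclicTriple

theorem isCyclicTriple_su2 {s : ℂ} (hs : s ≠ 0) :
    IsCyclicTriple s⁻¹ ((1 / (2 * s)) • !![(0 : ℂ), 1; -1, 0])
      ((I / (2 * s)) • !![(0 : ℂ), 1; 1, 0]) ((I / (2 * s)) • !![(1 : ℂ), 0; 0, -1]) := by
  have lie_XY :
      ⁅!![(0 : ℂ), 1; -1, 0], !![(0 : ℂ), 1; 1, 0]⁆ = (2 : ℂ) • !![(1 : ℂ), 0; 0, -1] := by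
    ext i j; fin_cases i <;> fin_cases j <;> norm_num [Ring.lie_def]
  have lie_YT :
      ⁅!![(0 : ℂ), 1; 1, 0], !![(1 : ℂ), 0; 0, -1]⁆ = (-2 : ℂ) • !![(0 : ℂ), 1; -1, 0] := by
    ext i j; fin_cases i <;> fin_cases j <;> norm_num [Ring.lie_def]
  have lie_TX :
      ⁅!![(1 : ℂ), 0; 0, -1], !![(0 : ℂ), 1; -1, 0]⁆ = (2 : ℂ) • !![(0 : ℂ), 1; 1, 0] := by
    ext i j; fin_cases i <;> fin_cases j <;> norm_num [Ring.lie_def]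
  constructor
  · rw [smul_lie, lie_smul, lie_XY, smul_smul, smul_smul, smul_smul]
    congr 1; field_simp
  · rw [smul_lie, lie_smul, lie_YT, smul_smul, smul_smul, smul_smul]
    congr 1; field_simp; rw [I_sq]; ring
  · rw [smul_lie, lie_smul, lie_TX, smul_smul, smul_smul, smul_smul]
    congr 1; field_simp

/-- Formulas for the orthogonal projections of `t*, x*, y*` onto the tangent space of
the coadjoint orbit through `λ = ξt* + η₁x* + η₂y*`, expressed via commutators in `su(2)`. -/
theorem coadjoint_orbit_projections
    (x y t : Matrix (Fin 2) (Fin 2) ℂ)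
    (hx : x = (1 / (2 * Real.sqrt 2) : ℂ) • !![0, 1; -1, 0])
    (hy : y = (I / (2 * Real.sqrt 2)) • !![0, 1; 1, 0])
    (ht : t = (I / (2 * Real.sqrt 2)) • !![1, 0; 0, -1])
    (ξ η₁ η₂ : ℝ) (hne : ¬(ξ = 0 ∧ η₁ = 0 ∧ η₂ = 0))
    (Δsq : ℝ) (hΔsq : Δsq = ξ ^ 2 + η₁ ^ 2 + η₂ ^ 2)
    (L Xt Xx Xy : Matrix (Fin 2) (Fin 2) ℂ)
    (hL : L = (ξ : ℂ) • t + (η₁ : ℂ) • x + (η₂ : ℂ) • y)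
    (hXt : Xt = ((Real.sqrt 2 / Δsq : ℝ) : ℂ) • ((η₂ : ℂ) • x - (η₁ : ℂ) • y))
    (hXx : Xx = ((Real.sqrt 2 / Δsq : ℝ) : ℂ) • ((ξ : ℂ) • y - (η₂ : ℂ) • t))
    (hXy : Xy = ((Real.sqrt 2 / Δsq : ℝ) : ℂ) • ((η₁ : ℂ) • t - (ξ : ℂ) • x)) :
    Xt * L - L * Xt = t - ((ξ / Δsq : ℝ) : ℂ) • L ∧
    Xx * L - L * Xx = x - ((η₁ / Δsq : ℝ) : ℂ) • L ∧
    Xy * L - L * Xy = y - ((η₂ / Δsq : ℝ) : ℂ) • L := by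
  have hΔ0 : (Δsq : ℂ) ≠ 0 := by
    rw [ofReal_ne_zero, hΔsq]
    contrapose! hne
    refine ⟨?_, ?_, ?_⟩ <;> nlinarith [sq_nonneg ξ, sq_nonneg η₁, sq_nonneg η₂]
  have hΔ : (Δsq : ℂ) = (ξ : ℂ) ^ 2 + (η₁ : ℂ) ^ 2 + (η₂ : ℂ) ^ 2 := by rw [hΔsq]; norm_cast
  have hs : (Real.sqrt 2 : ℂ) ≠ 0 := ofReal_ne_zero.2 (by positivity)
  have hsu2 : IsCyclicTriple (Real.sqrt 2 : ℂ)⁻¹ x y t := hx ▸ hy ▸ ht ▸ isCyclicTriple_su2 hs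
  have hcoef : ((Real.sqrt 2 / Δsq : ℝ) : ℂ) = (Real.sqrt 2 : ℂ)⁻¹⁻¹ / Δsq := by
    rw [inv_inv, ofReal_div]
  simp only [← Ring.lie_def, hXt, hXx, hXy, hcoef, ofReal_div]
  refine ⟨hsu2.lie_normalized (inv_ne_zero hs) hΔ hΔ0 hL,
    hsu2.rotate.lie_normalized (inv_ne_zero hs) (by rw [hΔ]; ring) hΔ0 (by rw [hL]; abel),
    hsu2.rotate.rotate.lie_normalized (inv_ne_zero hs) (by rw [hΔ]; ring) hΔ0 (by rw [hL]; abel)⟩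
end

section
/- Let s be a nonzero real number, let a > 0 and u, v be real numbers, set z := u + iv, and let p := [[a, z], [0, a⁻¹]]. Let x* := (s/√2)·[[0,i],[0,0]], y* := −(s/√2)·[[0,1],[0,0]], t* := (s/(2√2))·[[−1,0],[0,1]]. Then conjugation by p⁻¹ satisfies: p⁻¹·x*·p = a⁻²·x*, p⁻¹·y*·p = a⁻²·y*, and p⁻¹·t*·p = t* − (a⁻¹v)·x* + (a⁻¹u)·y*. -/
open Matrix Complex

section UpperTriangular

variable {R : Type*} [CommRing R]

theorem conj_upperTriangular_nilpotent (a b z w : R) :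
    !![b, -z; 0, a] * !![0, w; 0, 0] * !![a, z; 0, b] = b ^ 2 • !![0, w; 0, 0] := by
  ext i j
  fin_cases i <;> fin_cases j <;> simp [Matrix.mul_apply, Fin.sum_univ_two]
  ring

theorem conj_upperTriangular_diagonal (a b z : R) (hab : a * b = 1) :
    !![b, -z; 0, a] * !![-1, 0; 0, 1] * !![a, z; 0, b] =
      !![-1, 0; 0, 1] - (2 * b * z) • !![0, 1; 0, 0] := by
  ext i j
  fin_cases i <;> fin_cases j <;> simp [Matrix.mul_apply, Fin.sum_univ_two, mul_comm b a, hab]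
  ring

end UpperTriangular

theorem inv_upperTriangular {K : Type*} [Field K] {a : K} (ha : a ≠ 0) (z : K) :
    (!![a, z; 0, a⁻¹])⁻¹ = !![a⁻¹, -z; 0, a] := by
  refine inv_eq_right_inv ?_
  simp [Matrix.one_fin_two, ha, mul_comm]

theorem Ad_p_inv_on_an_general (s : ℝ)
    (a u v : ℝ) (ha : 0 < a) (z : ℂ) (hz : z = u + I * v)
    (xs ys ts : Matrix (Fin 2) (Fin 2) ℂ)
    (hxs : xs = ((s : ℂ) / Real.sqrt 2) • !![0, I; 0, 0])
    (hys : ys = -(((s : ℂ) / Real.sqrt 2) • !![0, 1; 0, 0]))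
    (hts : ts = ((s : ℂ) / (2 * Real.sqrt 2)) • !![-1, 0; 0, 1])
    (p : Matrix (Fin 2) (Fin 2) ℂ) (hp : p = !![(a : ℂ), z; 0, (a : ℂ)⁻¹]) :
    p⁻¹ * xs * p = ((a ^ (-2 : ℤ) : ℝ) : ℂ) • xs ∧
    p⁻¹ * ys * p = ((a ^ (-2 : ℤ) : ℝ) : ℂ) • ys ∧
    p⁻¹ * ts * p = ts - ((a⁻¹ * v : ℝ) : ℂ) • xs + ((a⁻¹ * u : ℝ) : ℂ) • ys := by
  have ha0 : (a : ℂ) ≠ 0 := by exact_mod_cast ha.ne'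
  have hpow : ((a ^ (-2 : ℤ) : ℝ) : ℂ) = (a : ℂ)⁻¹ ^ 2 := by
    push_cast
    rw [_root_.zpow_neg, inv_pow, zpow_two, sq]
  rw [hp, inv_upperTriangular ha0, hpow]
  subst hxs hys hts
  simp only [Matrix.mul_smul, Matrix.smul_mul, Matrix.mul_neg, Matrix.neg_mul,
    conj_upperTriangular_nilpotent, conj_upperTriangular_diagonal _ _ _ (mul_inv_cancel₀ ha0),
    smul_comm _ ((a : ℂ)⁻¹ ^ 2), smul_neg, true_and]
  subst hz
  -- only the (0,1) entry is left: (s / (2√2)) · 2a⁻¹z = (s / √2) · a⁻¹ (u + iv)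
  ext i j
  fin_cases i <;> fin_cases j <;> simp
  field_simp
  ring

/-- The adjoint action `Ad_{p⁻¹}` of `p ∈ AN` on the basis `{x*, y*, t*}` of `𝔞𝔫`. -/
theorem Ad_p_inv_on_an (s : ℝ) (hs : s ≠ 0)
    (a u v : ℝ) (ha : 0 < a) (z : ℂ) (hz : z = u + I * v)
    (xs ys ts : Matrix (Fin 2) (Fin 2) ℂ)
    (hxs : xs = ((s : ℂ) / Real.sqrt 2) • !![0, I; 0, 0])
    (hys : ys = -(((s : ℂ) / Real.sqrt 2) • !![0, 1; 0, 0]))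
    (hts : ts = ((s : ℂ) / (2 * Real.sqrt 2)) • !![-1, 0; 0, 1])
    (p : Matrix (Fin 2) (Fin 2) ℂ) (hp : p = !![(a : ℂ), z; 0, (a : ℂ)⁻¹]) :
    p⁻¹ * xs * p = ((a ^ (-2 : ℤ) : ℝ) : ℂ) • xs ∧
    p⁻¹ * ys * p = ((a ^ (-2 : ℤ) : ℝ) : ℂ) • ys ∧
    p⁻¹ * ts * p = ts - ((a⁻¹ * v : ℝ) : ℂ) • xs + ((a⁻¹ * u : ℝ) : ℂ) • ys :=
  Ad_p_inv_on_an_general s a u v ha z hz xs ys ts hxs hys hts p hp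
end

section
/- Let s, ξ, η₁, η₂ be real numbers with Δ := √(ξ² + η₁² + η₂²) > 0. Define a: ℝ → ℝ by a(τ) := (cosh(s(1+τ)Δ/√2) + (ξ/Δ)·sinh(s(1+τ)Δ/√2))^(−1/2) and z: ℝ → ℂ by z(τ) := a(τ)·(iη₁ − η₂)·sinh(s(1+τ)Δ/√2)/Δ, and let p: ℝ → M₂(ℂ) be p(τ) := [[a(τ), z(τ)], [0, a(τ)⁻¹]]. Set ε := Δ·sinh(sΔ/√2) + ξ·cosh(sΔ/√2) and a₀ := a(0). Then the matrix-valued function p is differentiable at 0, with derivative p′(0) = p(0) · (a₀²·(ε·t* + η₁·x* + η₂·y*)), where x* := (s/√2)·[[0,i],[0,0]], y* := −(s/√2)·[[0,1],[0,0]], t* := (s/(2√2))·[[−1,0],[0,1]]. -/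
open Matrix Complex

/-!
Write `θ(τ) = s(1+τ)Δ/√2` and `g = cosh θ + (ξ/Δ) sinh θ`, so `a = g^(-1/2)`; since `|ξ| ≤ Δ`
and `|sinh| < cosh`, `g > 0`. Differentiating entrywise, `a′ = -a³ g′/2` and `(a⁻¹)′ = -a′/a²`
give the diagonal of `p′(0)`, and the off-diagonal entry matches `p(0)` times the claimed
matrix thanks to `a₀² (Δ cosh + ξ sinh) = Δ` and `cosh² = sinh² + 1`.
-/

theorem Real.cosh_add_mul_sinh_pos_s12 {k : ℝ} (hk : |k| ≤ 1) (x : ℝ) :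
    0 < Real.cosh x + k * Real.sinh x := by
  have hle : |k * Real.sinh x| ≤ Real.sinh |x| := by
    rw [abs_mul, Real.abs_sinh]
    exact mul_le_of_le_one_left (Real.sinh_nonneg_iff.2 (abs_nonneg x)) hk
  have hlt := Real.sinh_lt_cosh |x|
  rw [Real.cosh_abs] at hlt
  linarith [neg_abs_le (k * Real.sinh x)]

theorem Real.rpow_neg_half_sq {y : ℝ} (hy : 0 ≤ y) : (y ^ (-(1 / 2) : ℝ)) ^ 2 = y⁻¹ := by
  rw [← Real.rpow_natCast, ← Real.rpow_mul hy]
  norm_num [Real.rpow_neg_one]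

theorem HasDerivAt.rpow_neg_half {f : ℝ → ℝ} {f' x : ℝ} (hf : HasDerivAt f f' x)
    (hx : 0 < f x) :
    HasDerivAt (fun y => f y ^ (-(1 / 2) : ℝ)) (-(f' / 2) * (f x ^ (-(1 / 2) : ℝ)) ^ 3) x := by
  convert hf.rpow_const (p := -(1 / 2)) (Or.inl hx.ne') using 1
  rw [← Real.rpow_natCast, ← Real.rpow_mul hx.le]
  norm_num [div_eq_mul_inv]

theorem HasDerivAt.cosh_add_mul_sinh_rpow_neg_half {θ : ℝ → ℝ} {c k x : ℝ}
    (hθ : HasDerivAt θ c x) (hk : |k| ≤ 1) :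
    HasDerivAt (fun τ => (Real.cosh (θ τ) + k * Real.sinh (θ τ)) ^ (-(1 / 2) : ℝ))
      (-(c / 2) * (Real.sinh (θ x) + k * Real.cosh (θ x)) *
        ((Real.cosh (θ x) + k * Real.sinh (θ x)) ^ (-(1 / 2) : ℝ)) ^ 3) x := by
  convert (hθ.cosh.fun_add (hθ.sinh.const_mul k)).rpow_neg_half
    (Real.cosh_add_mul_sinh_pos_s12 hk (θ x)) using 1
  ring

theorem hasDerivAt_upperTriangular_apply {𝕜 𝕜' : Type*} [NontriviallyNormedField 𝕜]
    [NontriviallyNormedField 𝕜'] [NormedAlgebra 𝕜 𝕜'] {a z : 𝕜 → 𝕜'} {a' z' : 𝕜'} {x : 𝕜}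
    (ha : HasDerivAt a a' x) (hz : HasDerivAt z z' x) (hax : a x ≠ 0) (i j : Fin 2) :
    HasDerivAt (fun τ => !![a τ, z τ; 0, (a τ)⁻¹] i j) (!![a', z'; 0, -a' / a x ^ 2] i j) x := by
  fin_cases i <;> fin_cases j
  exacts [ha, hz, hasDerivAt_const x 0, ha.inv hax]

theorem upperTriangular_deriv_eq_mul {s ξ η₁ η₂ Δ A c a' : ℝ} {z' : ℂ} (hΔ : Δ ≠ 0)
    (hA : A ≠ 0) (hc : c = s * Δ / Real.sqrt 2)
    (hAΔ : A ^ 2 * (Δ * Real.cosh c + ξ * Real.sinh c) = Δ)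
    (ha' : a' = -(c / 2) * (Real.sinh c + ξ / Δ * Real.cosh c) * A ^ 3)
    (hz' : z' =
      (a' * (I * η₁ - η₂) * Real.sinh c + A * (I * η₁ - η₂) * (Real.cosh c * c : ℝ)) / Δ) :
    !![(a' : ℂ), z'; 0, -(a' : ℂ) / (A : ℂ) ^ 2] =
      !![(A : ℂ), A * (I * η₁ - η₂) * Real.sinh c / Δ; 0, (A : ℂ)⁻¹] * (((A ^ 2 : ℝ) : ℂ) •
        (((Δ * Real.sinh c + ξ * Real.cosh c : ℝ) : ℂ) •
            (((s : ℂ) / (2 * Real.sqrt 2)) • !![-1, 0; 0, 1]) +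
          (η₁ : ℂ) • (((s : ℂ) / Real.sqrt 2) • !![0, I; 0, 0]) +
          (η₂ : ℂ) • -(((s : ℂ) / Real.sqrt 2) • !![0, 1; 0, 0]))) := by
  subst hc ha' hz'
  have hΔC : (Δ : ℂ) ≠ 0 := by exact_mod_cast hΔ
  have hAC : (A : ℂ) ≠ 0 := by exact_mod_cast hA
  have h2 : (Real.sqrt 2 : ℂ) ≠ 0 := by exact_mod_cast (Real.sqrt_pos.2 two_pos).ne'
  have hAΔC : (A : ℂ) ^ 2 * (Δ * Complex.cosh (s * Δ / Real.sqrt 2 : ℂ) +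
      ξ * Complex.sinh (s * Δ / Real.sqrt 2 : ℂ)) = Δ := by exact_mod_cast hAΔ
  have hCS := Complex.cosh_sq (s * Δ / Real.sqrt 2 : ℂ)
  ext i j
  fin_cases i <;> fin_cases j <;> simp [Matrix.mul_apply, Fin.sum_univ_two] <;> field_simp
  linear_combination (-2 * s * (I * η₁ - η₂) * Complex.cosh (s * Δ / Real.sqrt 2 : ℂ)) * hAΔC +
    (2 * s * (I * η₁ - η₂) * (A : ℂ) ^ 2 * Δ) * hCS

/-- The pushforward `Θᴸ d(E_s)_λ(λ)`: the curve `p(τ) = E_s((1+τ)λ)` is differentiable at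
`0` (entrywise) with `p′(0) = p(0)·(a₀²(ε·t* + η₁·x* + η₂·y*))`. -/
theorem deriv_Es_curve (s ξ η₁ η₂ : ℝ) (Δ : ℝ)
    (hΔdef : Δ = Real.sqrt (ξ ^ 2 + η₁ ^ 2 + η₂ ^ 2)) (hΔ : 0 < Δ)
    (a : ℝ → ℝ)
    (ha : ∀ τ, a τ = (Real.cosh (s * (1 + τ) * Δ / Real.sqrt 2) +
        (ξ / Δ) * Real.sinh (s * (1 + τ) * Δ / Real.sqrt 2)) ^ (-(1 / 2) : ℝ))
    (z : ℝ → ℂ)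
    (hz : ∀ τ, z τ = (a τ : ℂ) * (I * η₁ - η₂) *
        Real.sinh (s * (1 + τ) * Δ / Real.sqrt 2) / Δ)
    (p : ℝ → Matrix (Fin 2) (Fin 2) ℂ)
    (hp : ∀ τ, p τ = !![(a τ : ℂ), z τ; 0, (a τ : ℂ)⁻¹])
    (ε : ℝ)
    (hε : ε = Δ * Real.sinh (s * Δ / Real.sqrt 2) + ξ * Real.cosh (s * Δ / Real.sqrt 2))
    (a₀ : ℝ) (ha₀ : a₀ = a 0)
    (xs ys ts : Matrix (Fin 2) (Fin 2) ℂ)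
    (hxs : xs = ((s : ℂ) / Real.sqrt 2) • !![0, I; 0, 0])
    (hys : ys = -(((s : ℂ) / Real.sqrt 2) • !![0, 1; 0, 0]))
    (hts : ts = ((s : ℂ) / (2 * Real.sqrt 2)) • !![-1, 0; 0, 1]) :
    ∀ i j : Fin 2,
      HasDerivAt (fun τ => p τ i j)
        ((p 0 * (((a₀ ^ 2 : ℝ) : ℂ) •
          ((ε : ℂ) • ts + (η₁ : ℂ) • xs + (η₂ : ℂ) • ys))) i j) 0 := by
  subst hε ha₀ hxs hys hts
  set c := s * Δ / Real.sqrt 2 with hc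
  have hθ : HasDerivAt (fun τ : ℝ => s * (1 + τ) * Δ / Real.sqrt 2) c 0 := by
    simpa using ((((hasDerivAt_id (0 : ℝ)).const_add 1).const_mul s).mul_const Δ).div_const
      (Real.sqrt 2)
  have hθ0 : s * (1 + 0) * Δ / Real.sqrt 2 = c := by ring
  have hk : |ξ / Δ| ≤ 1 := by
    rw [abs_div, abs_of_pos hΔ, div_le_one hΔ, hΔdef, ← Real.sqrt_sq_eq_abs]
    exact Real.sqrt_le_sqrt (by nlinarith)
  have hg := Real.cosh_add_mul_sinh_pos_s12 hk c
  have ha0 : a 0 = (Real.cosh c + ξ / Δ * Real.sinh c) ^ (-(1 / 2) : ℝ) := by rw [ha 0, hθ0]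
  have hA0 : a 0 ≠ 0 := ha0 ▸ (Real.rpow_pos_of_pos hg _).ne'
  have hAΔ : a 0 ^ 2 * (Δ * Real.cosh c + ξ * Real.sinh c) = Δ := by
    rw [ha0, Real.rpow_neg_half_sq hg.le, inv_mul_eq_iff_eq_mul₀ hg.ne']
    field_simp
  have ha' : HasDerivAt a (-(c / 2) * (Real.sinh c + ξ / Δ * Real.cosh c) * a 0 ^ 3) 0 := by
    rw [ha0, funext ha]
    simpa only [hθ0] using hθ.cosh_add_mul_sinh_rpow_neg_half hk
  have hz' := ((ha'.ofReal_comp.mul_const (I * η₁ - η₂)).fun_mul hθ.sinh.ofReal_comp).div_const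
    (Δ : ℂ)
  rw [← funext hz, hθ0] at hz'
  intro i j
  rw [hp 0, hz 0, hθ0, ← upperTriangular_deriv_eq_mul hΔ.ne' hA0 hc hAΔ rfl rfl]
  simp only [hp]
  exact hasDerivAt_upperTriangular_apply ha'.ofReal_comp hz' (by exact_mod_cast hA0) i j
end
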